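/- Binary star reduction: let K be a simplicial complex position and (x, y) a binary star in K, meaning {x, y} ∉ K, and for every a ∈ K containing x the set (a \ {x}) ∪ {y} is in K, and symmetrically for every a ∈ K containing y the set (a \ {y}) ∪ {x} is in K. Then K has the same win/loss value as the reduced complex K' = { a ∈ K : x ∉ a and y ∉ a }. -/
import Mathlib


variable {α : Type*} [DecidableEq α]

/-- Playing move `a` in position `K` removes every simplex containing `a`. -/
def gameMove (K : Finset (Finset α)) (a : Finset α) : Finset (Finset α) :=
  K.filter fun b => ¬ a ⊆ b

/-- The player to move wins position `K` (normal play). -/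
def FirstWins (K : Finset (Finset α)) : Prop :=
  ∃ a : {a // a ∈ K}, ¬ FirstWins (gameMove K a.1)
termination_by K.card
decreasing_by
  refine Finset.card_lt_card ?_
  refine (Finset.ssubset_iff_of_subset (Finset.filter_subset _ _)).mpr ?_
  exact ⟨a.1, a.2, by simp⟩

/-- Standard starting position: all proper non-empty subsets of `A`. -/
def startPos (A : Finset α) : Finset (Finset α) :=
  A.powerset.filter fun s => s ≠ ∅ ∧ s ≠ A

/-- The filled simplex: all non-empty subsets of `A`, including `A`. -/
def fullSimplex (A : Finset α) : Finset (Finset α) :=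
  A.powerset.filter fun s => s ≠ ∅

/-- `K` is an abstract simplicial complex of non-empty sets. -/
def IsComplex (K : Finset (Finset α)) : Prop :=
  ∀ a ∈ K, a ≠ ∅ ∧ ∀ b ⊆ a, b ≠ ∅ → b ∈ K

/-- `(x, y)` is a binary star in `K`. -/
def BinaryStar (K : Finset (Finset α)) (x y : α) : Prop :=
  ({x, y} : Finset α) ∉ K ∧
  (∀ a ∈ K, x ∈ a → insert y (a.erase x) ∈ K) ∧
  (∀ a ∈ K, y ∈ a → insert x (a.erase y) ∈ K)

theorem firstWins_iff (K : Finset (Finset α)) :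
    FirstWins K ↔ ∃ a ∈ K, ¬ FirstWins (gameMove K a) := by
  rw [FirstWins]
  constructor
  · rintro ⟨⟨a, ha⟩, h⟩; exact ⟨a, ha, h⟩
  · rintro ⟨a, ha, h⟩; exact ⟨⟨a, ha⟩, h⟩

lemma gameMove_isComplex {K : Finset (Finset α)} (hK : IsComplex K) (a : Finset α) :
    IsComplex (gameMove K a) := by
  intro b hb
  rw [gameMove, Finset.mem_filter] at hb
  refine ⟨(hK b hb.1).1, fun c hc hcne => ?_⟩
  rw [gameMove, Finset.mem_filter]
  exact ⟨(hK b hb.1).2 c hc hcne, fun hac => hb.2 (hac.trans hc)⟩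

lemma gameMove_card_lt {K : Finset (Finset α)} {a : Finset α} (ha : a ∈ K) :
    (gameMove K a).card < K.card := by
  refine Finset.card_lt_card ?_
  refine (Finset.ssubset_iff_of_subset (Finset.filter_subset _ _)).mpr ?_
  exact ⟨a, ha, by simp [gameMove]⟩

lemma not_mem_both {K : Finset (Finset α)} {x y : α} (hK : IsComplex K)
    (hxy : ({x, y} : Finset α) ∉ K) {b : Finset α} (hb : b ∈ K) (hxb : x ∈ b) : y ∉ b := by
  intro hyb
  exact hxy ((hK b hb).2 {x, y} (by
    intro z hz
    rcases Finset.mem_insert.mp hz with rfl | hz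
    · exact hxb
    · rw [Finset.mem_singleton] at hz; subst hz; exact hyb)
    (by simp))

lemma binaryStar_symm {K : Finset (Finset α)} {x y : α} (h : BinaryStar K x y) :
    BinaryStar K y x := by
  obtain ⟨h1, h2, h3⟩ := h
  exact ⟨by rwa [Finset.pair_comm], h3, h2⟩

/-- Case of a move `a` disjoint from `{x, y}`. -/
lemma caseC {K : Finset (Finset α)} {x y : α} (hK : IsComplex K) (hbs : BinaryStar K x y)
    {a : Finset α} (ha : a ∈ K) (hax : x ∉ a) (hay : y ∉ a) :
    BinaryStar (gameMove K a) x y ∧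
      (gameMove K a).filter (fun b => x ∉ b ∧ y ∉ b)
        = gameMove (K.filter (fun b => x ∉ b ∧ y ∉ b)) a := by
  obtain ⟨h1, h2, h3⟩ := hbs
  constructor
  · refine ⟨fun hc => h1 (Finset.mem_filter.mp hc).1, ?_, ?_⟩
    · intro b hb hxb
      rw [gameMove, Finset.mem_filter] at hb ⊢
      refine ⟨h2 b hb.1 hxb, fun hsub => hb.2 (fun z hz => ?_)⟩
      have := hsub hz
      rcases Finset.mem_insert.mp this with rfl | hz'
      · exact absurd hz hay
      · exact Finset.mem_of_mem_erase hz'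
    · intro b hb hyb
      rw [gameMove, Finset.mem_filter] at hb ⊢
      refine ⟨h3 b hb.1 hyb, fun hsub => hb.2 (fun z hz => ?_)⟩
      have := hsub hz
      rcases Finset.mem_insert.mp this with rfl | hz'
      · exact absurd hz hax
      · exact Finset.mem_of_mem_erase hz'
  · ext b
    simp only [gameMove, Finset.mem_filter]
    tauto

/-- Case of a move `a` containing `x`: the reply `insert y (a.erase x)` works. -/
lemma caseA {K : Finset (Finset α)} {x y : α} {a : Finset α}
    (hxy : x ≠ y) (hK : IsComplex K) (hbs : BinaryStar K x y)
    (ha : a ∈ K) (hax : x ∈ a) :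
    insert y (a.erase x) ∈ gameMove K a ∧
    IsComplex (gameMove (gameMove K a) (insert y (a.erase x))) ∧
    BinaryStar (gameMove (gameMove K a) (insert y (a.erase x))) x y ∧
    (gameMove (gameMove K a) (insert y (a.erase x))).filter (fun b => x ∉ b ∧ y ∉ b)
      = K.filter (fun b => x ∉ b ∧ y ∉ b) ∧
    (gameMove (gameMove K a) (insert y (a.erase x))).card < K.card := by
  obtain ⟨h1, h2, h3⟩ := hbs
  have hay : y ∉ a := not_mem_both hK h1 ha hax
  set a' := insert y (a.erase x) with ha'def
  have hxa' : x ∉ a' := by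
    simp only [ha'def, Finset.mem_insert, Finset.mem_erase]
    push_neg
    exact ⟨hxy, fun h => absurd rfl h⟩
  have hya' : y ∈ a' := Finset.mem_insert_self _ _
  have ha'K : a' ∈ K := h2 a ha hax
  have ha'g : a' ∈ gameMove K a := by
    rw [gameMove, Finset.mem_filter]
    exact ⟨ha'K, fun hsub => hxa' (hsub hax)⟩
  set L := gameMove (gameMove K a) a' with hLdef
  have hLsub : ∀ b ∈ L, b ∈ K ∧ ¬ a ⊆ b ∧ ¬ a' ⊆ b := by
    intro b hb
    rw [hLdef, gameMove, Finset.mem_filter] at hb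
    rw [gameMove, Finset.mem_filter] at hb
    exact ⟨hb.1.1, hb.1.2, hb.2⟩
  have hLmem : ∀ b : Finset α, b ∈ K → ¬ a ⊆ b → ¬ a' ⊆ b → b ∈ L := by
    intro b hb h4 h5
    rw [hLdef, gameMove, Finset.mem_filter, gameMove, Finset.mem_filter]
    exact ⟨⟨hb, h4⟩, h5⟩
  refine ⟨ha'g, gameMove_isComplex (gameMove_isComplex hK a) a', ?_, ?_, ?_⟩
  · -- BinaryStar L x y
    refine ⟨fun hc => h1 (hLsub _ hc).1, ?_, ?_⟩
    · -- x side
      intro b hb hxb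
      obtain ⟨hbK, hnab, hna'b⟩ := hLsub b hb
      have hyb : y ∉ b := not_mem_both hK h1 hbK hxb
      refine hLmem _ (h2 b hbK hxb) ?_ ?_
      · intro hsub
        have : x ∈ insert y (b.erase x) := hsub hax
        rcases Finset.mem_insert.mp this with h | h
        · exact hxy h
        · exact absurd rfl (Finset.mem_erase.mp h).1
      · intro hsub
        apply hnab
        intro z hz
        by_cases hzx : z = x
        · subst hzx; exact hxb
        · have hz' : z ∈ a' := by
            rw [ha'def]
            exact Finset.mem_insert_of_mem (Finset.mem_erase.mpr ⟨hzx, hz⟩)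
          have := hsub hz'
          rcases Finset.mem_insert.mp this with rfl | h
          · exact absurd hz hay
          · exact Finset.mem_of_mem_erase h
    · -- y side
      intro b hb hyb
      obtain ⟨hbK, hnab, hna'b⟩ := hLsub b hb
      refine hLmem _ (h3 b hbK hyb) ?_ ?_
      · intro hsub
        apply hna'b
        intro z hz
        rw [ha'def] at hz
        rcases Finset.mem_insert.mp hz with rfl | hz'
        · exact hyb
        · have hza : z ∈ a := Finset.mem_of_mem_erase hz'
          have hzx : z ≠ x := (Finset.mem_erase.mp hz').1
          have := hsub hza
          rcases Finset.mem_insert.mp this with h | h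
          · exact absurd h hzx
          · exact Finset.mem_of_mem_erase h
      · intro hsub
        have : y ∈ insert x (b.erase y) := hsub hya'
        rcases Finset.mem_insert.mp this with h | h
        · exact hxy h.symm
        · exact absurd rfl (Finset.mem_erase.mp h).1
  · -- filter equality
    ext b
    simp only [Finset.mem_filter]
    constructor
    · rintro ⟨hb, hx', hy'⟩
      exact ⟨(hLsub b hb).1, hx', hy'⟩
    · rintro ⟨hb, hx', hy'⟩
      refine ⟨hLmem b hb (fun hsub => hx' (hsub hax)) (fun hsub => hy' (hsub hya')), hx', hy'⟩
  · -- card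
    calc L.card ≤ (gameMove K a).card := Finset.card_le_card (Finset.filter_subset _ _)
      _ < K.card := gameMove_card_lt ha

lemma filter_swap (K : Finset (Finset α)) (x y : α) :
    K.filter (fun b => y ∉ b ∧ x ∉ b) = K.filter (fun b => x ∉ b ∧ y ∉ b) := by
  apply Finset.filter_congr
  intro b _
  simp [and_comm]

lemma main_aux : ∀ (n : ℕ) (K : Finset (Finset α)) (x y : α), K.card ≤ n → x ≠ y →
    IsComplex K → BinaryStar K x y →
    (FirstWins K ↔ FirstWins (K.filter fun a => x ∉ a ∧ y ∉ a)) := by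
  intro n
  induction n with
  | zero =>
    intro K x y hc _ _ _
    have hKe : K = ∅ := Finset.card_eq_zero.mp (Nat.le_zero.mp hc)
    subst hKe
    simp
  | succ n ih =>
    intro K x y hc hxy hK hbs
    constructor
    · intro hw
      rw [firstWins_iff] at hw
      obtain ⟨a, ha, hna⟩ := hw
      by_cases hax : x ∈ a
      · obtain ⟨ha'g, hLc, hLbs, hLf, hLcard⟩ := caseA hxy hK hbs ha hax
        have hFL : FirstWins (gameMove (gameMove K a) (insert y (a.erase x))) := by
          rw [firstWins_iff] at hna
          push_neg at hna
          exact hna _ ha'g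
        have := ih _ x y (by omega) hxy hLc hLbs
        rw [hLf] at this
        exact this.mp hFL
      · by_cases hay : y ∈ a
        · obtain ⟨ha'g, hLc, hLbs, hLf, hLcard⟩ :=
            caseA hxy.symm hK (binaryStar_symm hbs) ha hay
          have hFL : FirstWins (gameMove (gameMove K a) (insert x (a.erase y))) := by
            rw [firstWins_iff] at hna
            push_neg at hna
            exact hna _ ha'g
          have := ih _ y x (by omega) hxy.symm hLc hLbs
          rw [hLf] at this
          rw [← filter_swap K x y]
          exact this.mp hFL
        · obtain ⟨hbs', hf⟩ := caseC hK hbs ha hax hay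
          rw [firstWins_iff]
          refine ⟨a, Finset.mem_filter.mpr ⟨ha, hax, hay⟩, ?_⟩
          rw [← hf]
          have hcard : (gameMove K a).card ≤ n := by
            have := gameMove_card_lt ha; omega
          exact fun hfw =>
            hna ((ih _ x y hcard hxy (gameMove_isComplex hK a) hbs').mpr hfw)
    · intro hw
      rw [firstWins_iff] at hw
      obtain ⟨a, ha, hna⟩ := hw
      rw [Finset.mem_filter] at ha
      obtain ⟨haK, hax, hay⟩ := ha
      obtain ⟨hbs', hf⟩ := caseC hK hbs haK hax hay
      rw [firstWins_iff]
      refine ⟨a, haK, ?_⟩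
      have hcard : (gameMove K a).card ≤ n := by
        have := gameMove_card_lt haK; omega
      rw [← hf] at hna
      exact fun hfw =>
        hna ((ih _ x y hcard hxy (gameMove_isComplex hK a) hbs').mp hfw)

theorem stmt7 (K : Finset (Finset α)) (x y : α) (hxy : x ≠ y) (hK : IsComplex K)
    (h : BinaryStar K x y) :
    (FirstWins K ↔ FirstWins (K.filter fun a => x ∉ a ∧ y ∉ a)) :=
  main_aux K.card K x y le_rfl hxy hK h
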